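/- arXiv:2306.15648 — 2 statements merged into one kernel-verified Lean document; each statement's English description precedes it below -/
import Mathlib

section
/- There is a constant c_d > 0 depending only on d such that: if K ⊆ ℝ^d is a convex body, ε > 0, and K has width at least ε in every direction, then the (d−1)-dimensional Hausdorff measure of the graph {(y, f_K(y)) : y ∈ K↓⊕2ε} is at most c_d · area(K). That is, the surface area of the lower boundary of the restricted support set K^{(2ε)} is at most a constant times the surface area of K. -/
open MeasureTheory Metric Set
open scoped RealInnerProductSpace ENNReal

noncomputable section

/-- Vertical projection `ℝ^d = ℝ^{d-1} × ℝ → ℝ^{d-1}` (forget the last coordinate). -/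
def vproj (n : ℕ) (x : EuclideanSpace ℝ (Fin (n + 1))) : EuclideanSpace ℝ (Fin n) :=
  WithLp.toLp 2 (fun j : Fin n => x j.castSucc)

/-- Lift `y ∈ ℝ^{d-1}` and `t ∈ ℝ` to the point `(y, t) ∈ ℝ^d`. -/
def vlift (n : ℕ) (y : EuclideanSpace ℝ (Fin n)) (t : ℝ) : EuclideanSpace ℝ (Fin (n + 1)) :=
  WithLp.toLp 2 (fun i : Fin (n + 1) => if h : (i : ℕ) < n then y ⟨i, h⟩ else t)

/-- The last standard basis vector `e_d` of `ℝ^d`. -/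
def ed (n : ℕ) : EuclideanSpace ℝ (Fin (n + 1)) := EuclideanSpace.single (Fin.last n) 1

/-- Support function of a set. -/
def suppFn {d : ℕ} (K : Set (EuclideanSpace ℝ (Fin d)))
    (u : EuclideanSpace ℝ (Fin d)) : ℝ :=
  sSup ((fun x => ⟪u, x⟫) '' K)

/-- Unit vectors `u` with `-u_d ≥ |u_j|` for all `j ≤ d-1` (downward-dominated directions). -/
def downDirs (n : ℕ) : Set (EuclideanSpace ℝ (Fin (n + 1))) :=
  {u | ‖u‖ = 1 ∧ ∀ j : Fin n, |u j.castSucc| ≤ -u (Fin.last n)}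

/-- The (downward) support set `S(K)`: intersection of the supporting halfspaces of `K`
with downward-dominated normals. -/
def SK {n : ℕ} (K : Set (EuclideanSpace ℝ (Fin (n + 1)))) :
    Set (EuclideanSpace ℝ (Fin (n + 1))) :=
  ⋂ u ∈ downDirs n, {x | ⟪u, x⟫ ≤ suppFn K u}

/-- The convex function whose graph is the lower boundary of `S(K)`. -/
def fK {n : ℕ} (K : Set (EuclideanSpace ℝ (Fin (n + 1)))) (y : EuclideanSpace ℝ (Fin n)) : ℝ :=
  sInf {t : ℝ | vlift n y t ∈ SK K}

/-- `K↓ ⊕ α`: points of `ℝ^{d-1}` within distance `α` of the vertical projection of `K`. -/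
def Koplus {n : ℕ} (K : Set (EuclideanSpace ℝ (Fin (n + 1)))) (α : ℝ) :
    Set (EuclideanSpace ℝ (Fin n)) :=
  {y | Metric.infDist y (vproj n '' K) ≤ α}

/-- The `α`-restricted support set `K^{(α)}`. -/
def Krestr {n : ℕ} (K : Set (EuclideanSpace ℝ (Fin (n + 1)))) (α : ℝ) :
    Set (EuclideanSpace ℝ (Fin (n + 1))) :=
  SK K ∩ {x | vproj n x ∈ Koplus K α}

/-- The lower boundary `∂̄K^{(α)}` of the restricted support set. -/
def lowerBdry {n : ℕ} (K : Set (EuclideanSpace ℝ (Fin (n + 1)))) (α : ℝ) :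
    Set (EuclideanSpace ℝ (Fin (n + 1))) :=
  (fun y => vlift n y (fK K y)) '' Koplus K α

/-- The base of the `ε`-dual cap of `K^{(2ε)}` induced by the point `q` and
outward normal `u`. -/
def DBase {n : ℕ} (K : Set (EuclideanSpace ℝ (Fin (n + 1)))) (ε : ℝ)
    (q u : EuclideanSpace ℝ (Fin (n + 1))) : Set (EuclideanSpace ℝ (Fin (n + 1))) :=
  {x | ⟪u, x - q⟫ = 0} ∩ closure (convexHull ℝ (Krestr K (2 * ε) ∪ {q - ε • ed n}))

/-- The projective dual of a U-shaped closed convex set. -/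
def Udual {n : ℕ} (U : Set (EuclideanSpace ℝ (Fin (n + 1)))) :
    Set (EuclideanSpace ℝ (Fin (n + 1))) :=
  {y | ∀ z ∈ U, ⟪vproj n y, vproj n z⟫ - z (Fin.last n) ≤ y (Fin.last n)}

/-!
The normals defining `S(K)` satisfy `‖û‖ ≤ √n · (-u_d)`, so `f_K` is `√n`-Lipschitz and
`y ↦ (y, f_K y)` is `(1 + √n)`-Lipschitz: the lower boundary has area at most `(1 + √n)ⁿ` times
the `n`-dimensional measure of `K↓ ⊕ 2ε`. The shadow `π K` has width at least `ε` in every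
direction, hence (Helly) contains a ball of radius `ε / (n + 1)`, so `K↓ ⊕ 2ε` lies in the image of
`π K` under a homothety of ratio `2n + 3`. Finally every vertical line through `K` meets `∂K`, so
`π K ⊆ π (∂K)` and, `π` being `1`-Lipschitz, `μH[n] (π K) ≤ area K`.
-/

open scoped NNReal

namespace RestrictedSupportSet

variable {n : ℕ}

@[simp]
lemma vlift_castSucc (y : EuclideanSpace ℝ (Fin n)) (t : ℝ) (j : Fin n) :
    vlift n y t j.castSucc = y j := by
  simp [vlift]

@[simp]
lemma vlift_last (y : EuclideanSpace ℝ (Fin n)) (t : ℝ) : vlift n y t (Fin.last n) = t := by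
  simp [vlift]

@[simp]
lemma vproj_vlift (y : EuclideanSpace ℝ (Fin n)) (t : ℝ) : vproj n (vlift n y t) = y := by
  ext j; simp [vproj]

lemma vlift_vproj (x : EuclideanSpace ℝ (Fin (n + 1))) :
    vlift n (vproj n x) (x (Fin.last n)) = x := by
  ext i
  induction i using Fin.lastCases <;> simp [vproj]

lemma inner_vlift (u : EuclideanSpace ℝ (Fin (n + 1))) (y : EuclideanSpace ℝ (Fin n)) (t : ℝ) :
    ⟪u, vlift n y t⟫ = ⟪vproj n u, y⟫ + u (Fin.last n) * t := by
  simp [PiLp.inner_apply, Fin.sum_univ_castSucc, vproj, mul_comm]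

lemma dist_vlift (y y' : EuclideanSpace ℝ (Fin n)) (t t' : ℝ) :
    dist (vlift n y t) (vlift n y' t') = √(dist y y' ^ 2 + dist t t' ^ 2) := by
  rw [EuclideanSpace.dist_eq, EuclideanSpace.dist_eq, Fin.sum_univ_castSucc,
    Real.sq_sqrt (by positivity)]
  simp

lemma isometry_vlift (y : EuclideanSpace ℝ (Fin n)) : Isometry (vlift n y) :=
  Isometry.of_dist_eq fun t t' => by simp [dist_vlift]

lemma dist_vlift_le (y y' : EuclideanSpace ℝ (Fin n)) (t t' : ℝ) :
    dist (vlift n y t) (vlift n y' t') ≤ dist y y' + dist t t' := by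
  rw [dist_vlift]
  refine Real.sqrt_le_iff.mpr ⟨by positivity, ?_⟩
  nlinarith [dist_nonneg (x := y) (y := y'), dist_nonneg (x := t) (y := t')]

lemma isLinearMap_vproj : IsLinearMap ℝ (vproj n) :=
  ⟨fun x y => by ext; simp [vproj], fun c x => by ext; simp [vproj]⟩

lemma lipschitzWith_vproj : LipschitzWith 1 (vproj n) :=
  LipschitzWith.of_dist_le_mul fun x x' => by
    rw [← vlift_vproj x, ← vlift_vproj x', dist_vlift, NNReal.coe_one, one_mul]
    simp only [vproj_vlift]
    exact Real.le_sqrt_of_sq_le (le_add_of_nonneg_right (sq_nonneg _))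

@[simp]
lemma vlift_zero : vlift n 0 0 = 0 := by
  ext i; induction i using Fin.lastCases <;> simp

lemma neg_vlift (y : EuclideanSpace ℝ (Fin n)) (t : ℝ) : -vlift n y t = vlift n (-y) (-t) := by
  ext i; induction i using Fin.lastCases <;> simp

lemma norm_vlift_zero (v : EuclideanSpace ℝ (Fin n)) : ‖vlift n v 0‖ = ‖v‖ := by
  rw [← dist_zero_right, ← dist_zero_right, ← vlift_zero, dist_vlift, dist_self,
    zero_pow two_ne_zero, add_zero, Real.sqrt_sq dist_nonneg]

section SupportFunction

open scoped Pointwise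

variable {d : ℕ} {A : Set (EuclideanSpace ℝ (Fin d))} {x : EuclideanSpace ℝ (Fin d)}

lemma le_suppFn (hA : IsCompact A) (hx : x ∈ A) (u : EuclideanSpace ℝ (Fin d)) :
    ⟪u, x⟫ ≤ suppFn A u :=
  le_csSup (hA.image (continuous_const.inner continuous_id)).bddAbove ⟨x, hx, rfl⟩

lemma suppFn_le (hne : A.Nonempty) {u : EuclideanSpace ℝ (Fin d)} {b : ℝ}
    (h : ∀ x ∈ A, ⟪u, x⟫ ≤ b) : suppFn A u ≤ b :=
  csSup_le (hne.image _) (by rintro _ ⟨x, hx, rfl⟩; exact h x hx)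

lemma exists_inner_eq_suppFn (hA : IsCompact A) (hne : A.Nonempty)
    (u : EuclideanSpace ℝ (Fin d)) : ∃ x ∈ A, ⟪u, x⟫ = suppFn A u := by
  obtain ⟨x, hx, hmax⟩ := hA.exists_isMaxOn (f := fun x => ⟪u, x⟫) hne
    (continuous_const.inner continuous_id).continuousOn
  exact ⟨x, hx, le_antisymm (le_suppFn hA hx u) (suppFn_le hne fun z hz => hmax hz)⟩

lemma suppFn_zero (hne : A.Nonempty) : suppFn A 0 = 0 := by
  simp [suppFn, hne.image_const]

lemma suppFn_smul {c : ℝ} (hc : 0 ≤ c) (u : EuclideanSpace ℝ (Fin d)) :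
    suppFn A (c • u) = c * suppFn A u := by
  have : (fun x => ⟪c • u, x⟫) '' A = c • ((fun x => ⟪u, x⟫) '' A) := by
    rw [← image_smul, image_image]
    simp [real_inner_smul_left]
  rw [suppFn, this, Real.sSup_smul_of_nonneg hc, smul_eq_mul, suppFn]

lemma exists_suppFn_lt_inner (hA : IsCompact A) (hAc : Convex ℝ A) (hne : A.Nonempty)
    (hx : x ∉ A) : ∃ w, suppFn A w < ⟪w, x⟫ := by
  obtain ⟨f, b, hfA, hfx⟩ := geometric_hahn_banach_closed_point hAc hA.isClosed hx
  refine ⟨(InnerProductSpace.toDual ℝ _).symm f, ?_⟩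
  simp only [InnerProductSpace.toDual_symm_apply]
  exact (suppFn_le hne fun a ha => by simpa using (hfA a ha).le).trans_lt hfx

lemma closedBall_subset_of_inner_add_le_suppFn (hA : IsCompact A) (hAc : Convex ℝ A)
    (hne : A.Nonempty) {c : EuclideanSpace ℝ (Fin d)} {r : ℝ}
    (h : ∀ v, ‖v‖ = 1 → ⟪v, c⟫ + r ≤ suppFn A v) : closedBall c r ⊆ A := by
  intro x hx
  by_contra hxA
  obtain ⟨w, hw⟩ := exists_suppFn_lt_inner hA hAc hne hxA
  have hw0 : w ≠ 0 := by rintro rfl; simp [suppFn_zero hne] at hw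
  set v := ‖w‖⁻¹ • w
  have hv : ‖v‖ = 1 := norm_smul_inv_norm hw0
  have hout : suppFn A v < ⟪v, x⟫ := by
    rw [suppFn_smul (by positivity), real_inner_smul_left]
    exact mul_lt_mul_of_pos_left hw (by positivity)
  have hin : ⟪v, x⟫ ≤ ⟪v, c⟫ + r := by
    have := real_inner_le_norm v (x - c)
    rw [inner_sub_right, hv, one_mul, ← dist_eq_norm] at this
    linarith [mem_closedBall.mp hx]
  linarith [h v hv]

end SupportFunction

lemma sum_add_le_card_mul {ι : Type*} {I : Finset ι} {a : ι → ℝ} {s δ : ℝ}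
    (hle : ∀ i ∈ I, a i ≤ s) {j : ι} (hj : j ∈ I) (hδ : a j + δ ≤ s) :
    ∑ i ∈ I, a i + δ ≤ I.card * s := by
  have : s - a j ≤ ∑ i ∈ I, (s - a i) :=
    Finset.single_le_sum (f := fun i => s - a i) (fun i hi => sub_nonneg.mpr (hle i hi)) hj
  rw [Finset.sum_sub_distrib, Finset.sum_const, nsmul_eq_mul] at this
  linarith

section Inradius

variable {P : Set (EuclideanSpace ℝ (Fin n))} {ε : ℝ}

/-- Helly's theorem for the caps `{x ∈ P | ⟪v, x⟫ ≤ h_P(v) - ε / (n + 1)}`: for at most `n + 1`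
directions `v`, the centroid of the points of `P` minimizing `⟪v, ·⟫` lies in all of them. -/
lemma exists_inner_add_le_suppFn_of_width (hP : IsCompact P) (hPc : Convex ℝ P)
    (hne : P.Nonempty) (hε : 0 ≤ ε)
    (hw : ∀ v : EuclideanSpace ℝ (Fin n), ‖v‖ = 1 → ε ≤ suppFn P v + suppFn P (-v)) :
    ∃ c, ∀ v, ‖v‖ = 1 → ⟪v, c⟫ + ε / (n + 1) ≤ suppFn P v := by
  let ι := sphere (0 : EuclideanSpace ℝ (Fin n)) 1
  have hunit (v : ι) : ‖(v : EuclideanSpace ℝ (Fin n))‖ = 1 := mem_sphere_zero_iff_norm.mp v.2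
  choose xmin hxminP hxmin using fun v : ι => exists_inner_eq_suppFn hP hne (-v)
  let F (v : ι) := P ∩ {x | ⟪(v : EuclideanSpace ℝ (Fin n)), x⟫ ≤ suppFn P v - ε / (n + 1)}
  have hFc (v : ι) : Convex ℝ (F v) :=
    hPc.inter (convex_halfSpace_le (innerₛₗ ℝ (v : EuclideanSpace ℝ (Fin n))).isLinear _)
  have hFk (v : ι) : IsCompact (F v) :=
    hP.inter_right (isClosed_le (continuous_const.inner continuous_id) continuous_const)
  obtain ⟨c, hc⟩ := Convex.helly_theorem_compact' hFc hFk fun I hI => by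
    rcases I.eq_empty_or_nonempty with rfl | hIne
    · simp
    have hcard : (0 : ℝ) < I.card := by exact_mod_cast hIne.card_pos
    have hcard' : (I.card : ℝ) ≤ n + 1 := by
      rw [finrank_euclideanSpace_fin] at hI; exact_mod_cast hI
    refine ⟨(I.card : ℝ)⁻¹ • ∑ v ∈ I, xmin v, mem_iInter₂.mpr fun v₀ hv₀ => ⟨?_, ?_⟩⟩
    · rw [Finset.smul_sum]
      refine hPc.sum_mem (fun _ _ => by positivity) ?_ fun v _ => hxminP v
      rw [Finset.sum_const, nsmul_eq_mul, mul_inv_cancel₀ hcard.ne']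
    · have hsum := sum_add_le_card_mul (δ := ε)
        (a := fun v => ⟪(v₀ : EuclideanSpace ℝ (Fin n)), xmin v⟫)
        (fun v _ => le_suppFn hP (hxminP v) _) hv₀
        (by have := hxmin v₀; rw [inner_neg_left] at this; linarith [hw v₀ (hunit v₀)])
      have hδ : ε / (n + 1) ≤ ε / I.card := div_le_div_of_nonneg_left hε hcard hcard'
      have hmean : (I.card : ℝ)⁻¹ * ∑ v ∈ I, ⟪(v₀ : EuclideanSpace ℝ (Fin n)), xmin v⟫
          + ε / I.card ≤ suppFn P v₀ := by
        rw [div_eq_inv_mul, ← mul_add, inv_mul_le_iff₀ hcard]; exact hsum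
      show ⟪_, _⟫ ≤ _
      rw [real_inner_smul_right, inner_sum]
      linarith
  refine ⟨c, fun v hv => ?_⟩
  have : ⟪v, c⟫ ≤ suppFn P v - ε / (n + 1) :=
    (mem_iInter.mp hc ⟨v, mem_sphere_zero_iff_norm.mpr hv⟩).2
  linarith

lemma exists_closedBall_subset_of_width (hP : IsCompact P) (hPc : Convex ℝ P)
    (hne : P.Nonempty) (hε : 0 ≤ ε)
    (hw : ∀ v : EuclideanSpace ℝ (Fin n), ‖v‖ = 1 → ε ≤ suppFn P v + suppFn P (-v)) :
    ∃ c, closedBall c (ε / (n + 1)) ⊆ P :=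
  let ⟨c, hc⟩ := exists_inner_add_le_suppFn_of_width hP hPc hne hε hw
  ⟨c, closedBall_subset_of_inner_add_le_suppFn hP hPc hne hc⟩

end Inradius

lemma setOf_infDist_le_subset_homothety_image {E : Type*} [NormedAddCommGroup E]
    [NormedSpace ℝ E] [ProperSpace E] {P : Set E} (hP : IsClosed P) (hPc : Convex ℝ P) {c : E}
    {a b : ℝ} (ha : 0 < a) (hb : 0 < b) (hball : closedBall c a ⊆ P) :
    {y | infDist y P ≤ b} ⊆ AffineMap.homothety c ((a + b) / a) '' P := by
  intro z hz
  obtain ⟨x, hxP, hdx⟩ := hP.exists_infDist_eq_dist ⟨c, hball (mem_closedBall_self ha.le)⟩ z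
  have hzx : ‖z - x‖ ≤ b := by rw [← dist_eq_norm, ← hdx]; exact hz
  -- `z` is the image of a convex combination of `x` and a point of the ball around `c`
  have hy : c + (a / b) • (z - x) ∈ P := hball <| by
    rw [mem_closedBall, dist_eq_norm, add_sub_cancel_left, norm_smul,
      Real.norm_of_nonneg (by positivity)]
    calc a / b * ‖z - x‖ ≤ a / b * b := by gcongr
      _ = a := div_mul_cancel₀ a hb.ne'
  refine ⟨(a / (a + b)) • x + (b / (a + b)) • (c + (a / b) • (z - x)),
    hPc hxP hy (by positivity) (by positivity) (by field_simp), ?_⟩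
  rw [AffineMap.homothety_apply, vsub_eq_sub, vadd_eq_add]
  match_scalars <;> field_simp <;> ring

section SupportSet

variable {K : Set (EuclideanSpace ℝ (Fin (n + 1)))}

lemma norm_vproj_le_of_mem_downDirs {u : EuclideanSpace ℝ (Fin (n + 1))} (hu : u ∈ downDirs n) :
    ‖vproj n u‖ ≤ √n * -u (Fin.last n) := by
  rcases n.eq_zero_or_pos with rfl | hn
  · simp [EuclideanSpace.norm_eq]
  have hd : 0 ≤ -u (Fin.last n) := (abs_nonneg _).trans (hu.2 ⟨0, hn⟩)
  rw [EuclideanSpace.norm_eq, ← Real.sqrt_sq hd, ← Real.sqrt_mul (Nat.cast_nonneg n)]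
  refine Real.sqrt_le_sqrt ?_
  calc ∑ j, ‖vproj n u j‖ ^ 2 ≤ ∑ _j : Fin n, (-u (Fin.last n)) ^ 2 :=
        Finset.sum_le_sum fun j _ => by
          simpa [vproj, Real.norm_eq_abs] using pow_le_pow_left₀ (abs_nonneg _) (hu.2 j) 2
    _ = n * (-u (Fin.last n)) ^ 2 := by simp

lemma mem_SK_iff {x : EuclideanSpace ℝ (Fin (n + 1))} :
    x ∈ SK K ↔ ∀ u ∈ downDirs n, ⟪u, x⟫ ≤ suppFn K u := by
  simp [SK]

lemma subset_SK (hK : IsCompact K) : K ⊆ SK K :=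
  fun _ hx => mem_SK_iff.mpr fun u _ => le_suppFn hK hx u

lemma vlift_add_mem_SK {y : EuclideanSpace ℝ (Fin n)} {t : ℝ} (h : vlift n y t ∈ SK K)
    (y' : EuclideanSpace ℝ (Fin n)) : vlift n y' (t + √n * dist y' y) ∈ SK K := by
  rw [mem_SK_iff] at h ⊢
  intro u hu
  have hyy' : ⟪vproj n u, y' - y⟫ ≤ ‖vproj n u‖ * dist y' y :=
    dist_eq_norm y' y ▸ real_inner_le_norm _ _
  have := mul_le_mul_of_nonneg_right (norm_vproj_le_of_mem_downDirs hu) 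
    (dist_nonneg (x := y') (y := y))
  have := h u hu
  rw [inner_vlift, inner_sub_right] at *
  nlinarith

lemma bddBelow_fiber_SK (y : EuclideanSpace ℝ (Fin n)) : BddBelow {t | vlift n y t ∈ SK K} := by
  have hdown : vlift n 0 (-1) ∈ downDirs n :=
    ⟨by simp [← dist_zero_right, ← vlift_zero, dist_vlift, Real.dist_eq], fun j => by simp⟩
  refine ⟨-suppFn K (vlift n 0 (-1)), fun t ht => ?_⟩
  have := mem_SK_iff.mp ht _ hdown
  rw [inner_vlift] at this
  simp only [vproj_vlift, inner_zero_left, vlift_last] at this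
  linarith

lemma fiber_SK_nonempty (hK : IsCompact K) (hne : K.Nonempty) (y : EuclideanSpace ℝ (Fin n)) :
    {t | vlift n y t ∈ SK K}.Nonempty := by
  obtain ⟨x, hx⟩ := hne
  have : vlift n (vproj n x) (x (Fin.last n)) ∈ SK K := by rw [vlift_vproj]; exact subset_SK hK hx
  exact ⟨_, vlift_add_mem_SK this y⟩

lemma lipschitzWith_fK (hK : IsCompact K) (hne : K.Nonempty) :
    LipschitzWith (NNReal.sqrt n) (fK K) :=
  LipschitzWith.of_le_add_mul _ fun y y' => by
    rw [Real.coe_sqrt, NNReal.coe_natCast]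
    have h : ∀ t ∈ {t | vlift n y' t ∈ SK K}, fK K y - √n * dist y y' ≤ t := fun t ht =>
      sub_le_iff_le_add.mpr (csInf_le (bddBelow_fiber_SK y) (vlift_add_mem_SK ht y))
    exact sub_le_iff_le_add.mp (le_csInf (fiber_SK_nonempty hK hne y') h)

end SupportSet

lemma lipschitzWith_vlift_graph {f : EuclideanSpace ℝ (Fin n) → ℝ} {L : ℝ≥0}
    (hf : LipschitzWith L f) : LipschitzWith (1 + L) fun y => vlift n y (f y) :=
  LipschitzWith.of_dist_le_mul fun y y' => by
    push_cast
    linarith [dist_vlift_le y y' (f y) (f y'), hf.dist_le_mul y y']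

lemma exists_mem_frontier_vproj_eq {K : Set (EuclideanSpace ℝ (Fin (n + 1)))}
    (hK : IsCompact K) {x : EuclideanSpace ℝ (Fin (n + 1))} (hx : x ∈ K) :
    ∃ z ∈ frontier K, vproj n z = vproj n x := by
  let line := vlift n (vproj n x)
  have hcompact : IsCompact (line ⁻¹' K) :=
    (isometry_vlift _).isClosedEmbedding.isCompact_preimage hK
  obtain ⟨t, ht⟩ : (frontier (line ⁻¹' K)).Nonempty := by
    refine nonempty_frontier_iff.mpr ⟨⟨x (Fin.last n), by simpa [line, vlift_vproj]⟩, ?_⟩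
    rintro huniv
    exact noncompact_univ ℝ (huniv ▸ hcompact)
  exact ⟨line t, (isometry_vlift _).continuous.frontier_preimage_subset K ht, vproj_vlift _ _⟩

lemma hausdorffMeasure_vproj_image_le_frontier {K : Set (EuclideanSpace ℝ (Fin (n + 1)))}
    (hK : IsCompact K) {s : ℝ} (hs : 0 ≤ s) : μH[s] (vproj n '' K) ≤ μH[s] (frontier K) :=
  calc μH[s] (vproj n '' K) ≤ μH[s] (vproj n '' frontier K) := by
        refine measure_mono ?_
        rintro _ ⟨x, hx, rfl⟩
        obtain ⟨z, hz, hzx⟩ := exists_mem_frontier_vproj_eq hK hx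
        exact ⟨z, hz, hzx⟩
    _ ≤ μH[s] (frontier K) := by
        simpa using lipschitzWith_vproj.hausdorffMeasure_image_le hs (frontier K)

lemma suppFn_image_vproj (K : Set (EuclideanSpace ℝ (Fin (n + 1))))
    (v : EuclideanSpace ℝ (Fin n)) : suppFn (vproj n '' K) v = suppFn K (vlift n v 0) := by
  rw [suppFn, suppFn, image_image]
  congr 1
  refine image_congr fun x _ => ?_
  rw [real_inner_comm x, inner_vlift, mul_zero, add_zero, real_inner_comm]

lemma hausdorffMeasure_Koplus_two_mul_le {K : Set (EuclideanSpace ℝ (Fin (n + 1)))}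
    (hK : IsCompact K) (hKc : Convex ℝ K) (hne : K.Nonempty) {ε : ℝ} (hε : 0 < ε)
    (hw : ∀ u : EuclideanSpace ℝ (Fin (n + 1)), ‖u‖ = 1 → ε ≤ suppFn K u + suppFn K (-u))
    {s : ℝ} (hs : 0 ≤ s) :
    μH[s] (Koplus K (2 * ε)) ≤ (2 * n + 3 : ℝ≥0) ^ s * μH[s] (vproj n '' K) := by
  set P := vproj n '' K
  have hP : IsCompact P := hK.image lipschitzWith_vproj.continuous
  have hPc : Convex ℝ P := hKc.is_linear_image isLinearMap_vproj
  have hPw (v : EuclideanSpace ℝ (Fin n)) (hv : ‖v‖ = 1) : ε ≤ suppFn P v + suppFn P (-v) := by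
    simpa [P, suppFn_image_vproj, neg_vlift] using hw _ ((norm_vlift_zero v).trans hv)
  obtain ⟨c, hball⟩ := exists_closedBall_subset_of_width hP hPc (hne.image _) hε.le hPw
  have hratio : (ε / (n + 1) + 2 * ε) / (ε / (n + 1)) = ((2 * n + 3 : ℝ≥0) : ℝ) := by
    push_cast; field_simp; ring
  have hKP : Koplus K (2 * ε) ⊆ AffineMap.homothety c ((2 * n + 3 : ℝ≥0) : ℝ) '' P :=
    hratio ▸ setOf_infDist_le_subset_homothety_image hP.isClosed hPc (by positivity)
      (by positivity) hball
  refine (measure_mono hKP).trans_eq ?_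
  rw [hausdorffMeasure_homothety_image hs c (by positivity), NNReal.nnnorm_eq, ENNReal.smul_def,
    smul_eq_mul, ENNReal.coe_rpow_of_nonneg _ hs]

end RestrictedSupportSet

open RestrictedSupportSet in
theorem area_of_restricted_support_set_general (n : ℕ) :
    ∃ c : ℝ, 0 < c ∧
      ∀ (K : Set (EuclideanSpace ℝ (Fin (n + 1)))),
        IsCompact K → Convex ℝ K → (interior K).Nonempty →
        ∀ ε : ℝ, 0 < ε →
        (∀ u : EuclideanSpace ℝ (Fin (n + 1)), ‖u‖ = 1 → ε ≤ suppFn K u + suppFn K (-u)) →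
        μH[(n : ℝ)] ((fun y => vlift n y (fK K y)) '' Koplus K (2 * ε))
          ≤ ENNReal.ofReal c * μH[(n : ℝ)] (frontier K) := by
  refine ⟨(((1 + NNReal.sqrt n) * (2 * n + 3)) ^ n : ℝ≥0), by positivity, ?_⟩
  intro K hK hKc hKi ε hε hw
  have hne : K.Nonempty := hKi.mono interior_subset
  have hn : (0 : ℝ) ≤ n := n.cast_nonneg
  calc μH[(n : ℝ)] ((fun y => vlift n y (fK K y)) '' Koplus K (2 * ε))
      ≤ (1 + NNReal.sqrt n : ℝ≥0) ^ (n : ℝ) * μH[(n : ℝ)] (Koplus K (2 * ε)) :=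
        (lipschitzWith_vlift_graph (lipschitzWith_fK hK hne)).hausdorffMeasure_image_le hn _
    _ ≤ (1 + NNReal.sqrt n : ℝ≥0) ^ (n : ℝ) *
          ((2 * n + 3 : ℝ≥0) ^ (n : ℝ) * μH[(n : ℝ)] (vproj n '' K)) := by
        gcongr
        exact hausdorffMeasure_Koplus_two_mul_le hK hKc hne hε hw hn
    _ ≤ (1 + NNReal.sqrt n : ℝ≥0) ^ (n : ℝ) *
          ((2 * n + 3 : ℝ≥0) ^ (n : ℝ) * μH[(n : ℝ)] (frontier K)) := by
        gcongr
        exact hausdorffMeasure_vproj_image_le_frontier hK hn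
    _ = _ := by
        rw [ENNReal.ofReal_coe_nnreal, mul_pow, ENNReal.coe_mul, ENNReal.coe_pow, ENNReal.coe_pow,
          ENNReal.rpow_natCast, ENNReal.rpow_natCast, mul_assoc]

/-- the surface area of the lower boundary of the restricted support set
`K^{(2ε)}` is at most a constant (depending only on the dimension) times the surface
area of `K`, provided `K` has width at least `ε` in every direction.
Here the dimension is `d = n + 1 ≥ 2`. -/
theorem area_of_restricted_support_set (n : ℕ) (hn : 1 ≤ n) :
    ∃ c : ℝ, 0 < c ∧
      ∀ (K : Set (EuclideanSpace ℝ (Fin (n + 1)))),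
        IsCompact K → Convex ℝ K → (interior K).Nonempty →
        ∀ ε : ℝ, 0 < ε →
        (∀ u : EuclideanSpace ℝ (Fin (n + 1)), ‖u‖ = 1 → ε ≤ suppFn K u + suppFn K (-u)) →
        μH[(n : ℝ)] ((fun y => vlift n y (fK K y)) '' Koplus K (2 * ε))
          ≤ ENNReal.ofReal c * μH[(n : ℝ)] (frontier K) :=
  area_of_restricted_support_set_general n
end
end

section
/- There is a constant c_d > 0 depending only on d such that: let K ⊆ ℝ^d (d ≥ 2) be a convex body and ε > 0 with K ⊆ [−(1−2ε), 1−2ε]^d, and let U = K^{(2ε)} and U* its projective dual. For every q ∈ ∂̄K^{(ε)} and every outward unit normal u of S(K) at q, writing the supporting hyperplane {x : ⟨u, x − q⟩ = 0} as {x : x_d = ⟨p̂, x̂⟩ − p_d} for p ∈ ℝ^d, the ε-cap of U* induced by p, namely {y ∈ frontier(U*) : y_d ≤ ⟨q̂, ŷ⟩ − q_d + ε}, has vertical projection contained in the closed ball of radius c_d centered at the origin of ℝ^{d−1}. -/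
/-!
Take `w` in the cap and test `w ∈ U*` against the point of `∂̄K^{(2ε)}` over `q̂ + ε ŵ/‖ŵ‖`.
The linear part gains `ε ‖ŵ‖`. Since `S(K)` is stable under adding vectors `(z, √(d-1) ‖z‖)`,
which lie in the cone polar to the downward-dominated directions, `f_K` is `√(d-1)`-Lipschitz
and loses at most `√(d-1) ε`. A cap of height `ε` therefore forces `‖ŵ‖ ≤ √(d-1) + 1`.
-/

open MeasureTheory Metric Set
open scoped RealInnerProductSpace ENNReal

noncomputable section

section Coordinates

variable {n : ℕ}

@[simp]
lemma vlift_castSucc (y : EuclideanSpace ℝ (Fin n)) (t : ℝ) (j : Fin n) :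
    vlift n y t j.castSucc = y j := by
  simp [vlift]

@[simp]
lemma vlift_last (y : EuclideanSpace ℝ (Fin n)) (t : ℝ) : vlift n y t (Fin.last n) = t := by
  simp [vlift]

@[simp]
lemma vproj_apply (x : EuclideanSpace ℝ (Fin (n + 1))) (j : Fin n) :
    vproj n x j = x j.castSucc :=
  rfl

@[simp]
lemma vproj_vlift (y : EuclideanSpace ℝ (Fin n)) (t : ℝ) : vproj n (vlift n y t) = y := by
  ext j
  simp

lemma vlift_vproj (x : EuclideanSpace ℝ (Fin (n + 1))) :
    vlift n (vproj n x) (x (Fin.last n)) = x := by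
  ext i
  induction i using Fin.lastCases <;> simp

lemma inner_eq_inner_vproj_add (u x : EuclideanSpace ℝ (Fin (n + 1))) :
    ⟪u, x⟫ = ⟪vproj n u, vproj n x⟫ + u (Fin.last n) * x (Fin.last n) := by
  simp only [PiLp.inner_apply, RCLike.inner_apply, conj_trivial, Fin.sum_univ_castSucc,
    vproj_apply]
  ring

lemma inner_vlift (u : EuclideanSpace ℝ (Fin (n + 1))) (y : EuclideanSpace ℝ (Fin n)) (t : ℝ) :
    ⟪u, vlift n y t⟫ = ⟪vproj n u, y⟫ + u (Fin.last n) * t := by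
  rw [inner_eq_inner_vproj_add, vproj_vlift, vlift_last]

lemma continuous_vproj : Continuous (vproj n) :=
  (PiLp.continuous_toLp 2 _).comp (continuous_pi fun j => PiLp.continuous_apply 2 _ j.castSucc)

lemma continuous_vlift (y : EuclideanSpace ℝ (Fin n)) : Continuous (vlift n y) :=
  (PiLp.continuous_toLp 2 _).comp <| continuous_pi fun i => by
    by_cases hi : (i : ℕ) < n <;> simp only [hi, dite_true, dite_false] <;> fun_prop

end Coordinates

lemma EuclideanSpace.norm_le_sqrt_card_mul {ι : Type*} [Fintype ι] (x : EuclideanSpace ℝ ι)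
    {c : ℝ} (hc : 0 ≤ c) (h : ∀ i, |x i| ≤ c) : ‖x‖ ≤ √(Fintype.card ι) * c := by
  refine (pow_le_pow_iff_left₀ (norm_nonneg x) (by positivity) two_ne_zero).mp ?_
  calc ‖x‖ ^ 2 = ∑ i, x i ^ 2 := EuclideanSpace.real_norm_sq_eq x
    _ ≤ ∑ _ : ι, c ^ 2 := Finset.sum_le_sum fun i _ => by
      simpa only [sq_abs] using pow_le_pow_left₀ (abs_nonneg _) (h i) 2
    _ = (√(Fintype.card ι) * c) ^ 2 := by simp [mul_pow]

section SupportSet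

variable {n : ℕ} {K : Set (EuclideanSpace ℝ (Fin (n + 1)))}

lemma isClosed_SK : IsClosed (SK K) :=
  isClosed_biInter fun _ _ => isClosed_le (by fun_prop) continuous_const

lemma subset_SK (hK : IsCompact K) : K ⊆ SK K := fun x hx =>
  mem_iInter₂.mpr fun u _ =>
    show ⟪u, x⟫ ≤ suppFn K u from
      le_csSup (hK.image (continuous_const.inner continuous_id)).bddAbove (mem_image_of_mem _ hx)

lemma norm_vproj_le_of_mem_downDirs (hn : 1 ≤ n) {u : EuclideanSpace ℝ (Fin (n + 1))}
    (hu : u ∈ downDirs n) : ‖vproj n u‖ ≤ √n * -u (Fin.last n) := by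
  simpa using EuclideanSpace.norm_le_sqrt_card_mul (vproj n u)
    ((abs_nonneg _).trans (hu.2 ⟨0, hn⟩)) hu.2

lemma vlift_add_mem_SK (hn : 1 ≤ n) {y z : EuclideanSpace ℝ (Fin n)} {t : ℝ}
    (h : vlift n y t ∈ SK K) : vlift n (y + z) (t + √n * ‖z‖) ∈ SK K := by
  refine mem_iInter₂.mpr fun u hu => ?_
  have hy : ⟪u, vlift n y t⟫ ≤ suppFn K u := mem_iInter₂.mp h u hu
  have hz : ⟪vproj n u, z⟫ ≤ ‖vproj n u‖ * ‖z‖ := real_inner_le_norm _ _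
  have hu' := mul_le_mul_of_nonneg_right (norm_vproj_le_of_mem_downDirs hn hu) (norm_nonneg z)
  rw [mem_ofPred_eq, inner_vlift, inner_add_right]
  rw [inner_vlift] at hy
  linarith

end SupportSet

section LowerBoundary

variable {n : ℕ} {K : Set (EuclideanSpace ℝ (Fin (n + 1)))}

lemma neg_ed_mem_downDirs : -ed n ∈ downDirs n :=
  ⟨by simp [ed], fun j => by simp [ed, (Fin.castSucc_lt_last j).ne]⟩

lemma bddBelow_vlift_mem_SK (y : EuclideanSpace ℝ (Fin n)) :
    BddBelow {t | vlift n y t ∈ SK K} := by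
  refine ⟨-suppFn K (-ed n), fun t ht => ?_⟩
  have h : ⟪-ed n, vlift n y t⟫ ≤ suppFn K (-ed n) := mem_iInter₂.mp ht _ neg_ed_mem_downDirs
  have hproj : vproj n (-ed n) = 0 := by
    ext j
    simp [ed, (Fin.castSucc_lt_last j).ne]
  have hlast : (-ed n) (Fin.last n) = -1 := by simp [ed]
  rw [inner_vlift, hproj, hlast, inner_zero_left] at h
  linarith

lemma vlift_fK_mem_SK (hn : 1 ≤ n) (hK : IsCompact K) (hK₀ : K.Nonempty)
    (y : EuclideanSpace ℝ (Fin n)) : vlift n y (fK K y) ∈ SK K := by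
  obtain ⟨x, hx⟩ := hK₀
  have hclosed : IsClosed {t | vlift n y t ∈ SK K} :=
    isClosed_SK.preimage (continuous_vlift y)
  have hx' : vlift n (vproj n x) (x (Fin.last n)) ∈ SK K :=
    (vlift_vproj x).symm ▸ subset_SK hK hx
  have hne : {t | vlift n y t ∈ SK K}.Nonempty :=
    ⟨_, by simpa using vlift_add_mem_SK hn (z := y - vproj n x) hx'⟩
  exact hclosed.csInf_mem hne (bddBelow_vlift_mem_SK y)

lemma fK_add_le (hn : 1 ≤ n) (hK : IsCompact K) (hK₀ : K.Nonempty)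
    (y z : EuclideanSpace ℝ (Fin n)) : fK K (y + z) ≤ fK K y + √n * ‖z‖ :=
  csInf_le (bddBelow_vlift_mem_SK _) (vlift_add_mem_SK hn (vlift_fK_mem_SK hn hK hK₀ y))

end LowerBoundary

section DualCaps

variable {n : ℕ} {K : Set (EuclideanSpace ℝ (Fin (n + 1)))}

lemma isClosed_Udual (U : Set (EuclideanSpace ℝ (Fin (n + 1)))) : IsClosed (Udual U) := by
  simp only [Udual, ofPred_forall]
  exact isClosed_biInter fun z _ => isClosed_le
    ((continuous_vproj.inner continuous_const).sub continuous_const)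
    (PiLp.continuous_apply 2 _ _)

lemma mem_Koplus_of_dist_le {α δ : ℝ} {y y' : EuclideanSpace ℝ (Fin n)} (hy : y ∈ Koplus K α)
    (hyy' : dist y' y ≤ δ) : y' ∈ Koplus K (α + δ) :=
  infDist_le_infDist_add_dist.trans (by simp only [Koplus, mem_ofPred_eq] at hy; linarith)

lemma norm_vproj_le_of_mem_Udual (hn : 1 ≤ n) (hK : IsCompact K) (hK₀ : K.Nonempty)
    {α ε h : ℝ} (hε : 0 ≤ ε) {y : EuclideanSpace ℝ (Fin n)} (hy : y ∈ Koplus K α)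
    {w : EuclideanSpace ℝ (Fin (n + 1))} (hw : w ∈ Udual (Krestr K (α + ε)))
    (hcap : w (Fin.last n) ≤ ⟪y, vproj n w⟫ - fK K y + h) :
    ε * ‖vproj n w‖ ≤ √n * ε + h := by
  set a := vproj n w
  set v := ‖a‖⁻¹ • a
  have hv : ‖v‖ ≤ 1 := by
    rcases eq_or_ne a 0 with ha | ha
    · simp [v, ha]
    · exact (norm_smul_inv_norm ha).le
  have hav : ⟪a, v⟫ = ‖a‖ := by
    rcases eq_or_ne ‖a‖ 0 with ha | ha
    · simp [v, ha]
    · rw [real_inner_smul_right, real_inner_self_eq_norm_sq]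
      field_simp
  have hεv : ‖ε • v‖ ≤ ε := by
    rw [norm_smul, Real.norm_of_nonneg hε]
    exact mul_le_of_le_one_right hε hv
  have hy' : y + ε • v ∈ Koplus K (α + ε) :=
    mem_Koplus_of_dist_le hy (by rwa [dist_eq_norm, add_sub_cancel_left])
  have hdual := hw _ ⟨vlift_fK_mem_SK hn hK hK₀ _, by rwa [mem_ofPred_eq, vproj_vlift]⟩
  have hlip := fK_add_le hn hK hK₀ y (ε • v)
  rw [vproj_vlift, vlift_last, inner_add_right, real_inner_smul_right, hav] at hdual
  have := mul_le_mul_of_nonneg_left hεv (Real.sqrt_nonneg n)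
  rw [real_inner_comm] at hcap
  linarith

end DualCaps

/-- there is `c_d > 0` such that, for a convex body
`K ⊆ [−(1−2ε), 1−2ε]^d` and `U = K^{(2ε)}`, every useful `ε`-cap of the projective dual
`U*` (induced by a point of `∂̄K^{(ε)}` with an outward unit normal, whose supporting
hyperplane is written via `p`) has vertical projection contained in the closed ball of
radius `c_d` about the origin of `ℝ^{d-1}`. -/
theorem useful_dual_caps_bounded (n : ℕ) (hn : 1 ≤ n) :
    ∃ c : ℝ, 0 < c ∧
      ∀ (K : Set (EuclideanSpace ℝ (Fin (n + 1)))),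
        IsCompact K → Convex ℝ K → (interior K).Nonempty →
        ∀ ε : ℝ, 0 < ε →
        (∀ x ∈ K, ∀ i : Fin (n + 1), |x i| ≤ 1 - 2 * ε) →
        ∀ q ∈ lowerBdry K ε, ∀ u : EuclideanSpace ℝ (Fin (n + 1)), ‖u‖ = 1 →
          (∀ x ∈ SK K, ⟪u, x - q⟫ ≤ 0) →
          ∀ p : EuclideanSpace ℝ (Fin (n + 1)),
            ({x : EuclideanSpace ℝ (Fin (n + 1)) | ⟪u, x - q⟫ = 0} =
              {x | x (Fin.last n) = ⟪vproj n p, vproj n x⟫ - p (Fin.last n)}) →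
            vproj n ''
                {y ∈ frontier (Udual (Krestr K (2 * ε))) |
                  y (Fin.last n) ≤ ⟪vproj n q, vproj n y⟫ - q (Fin.last n) + ε}
              ⊆ Metric.closedBall 0 c := by
  refine ⟨√n + 1, by positivity, ?_⟩
  rintro K hK - hKint ε hε - _ ⟨y, hy, rfl⟩ - - - - - _ ⟨w, ⟨hw, hcap⟩, rfl⟩
  have hwU : w ∈ Udual (Krestr K (ε + ε)) := by
    rw [← two_mul]
    exact (isClosed_Udual _).frontier_subset hw
  rw [vproj_vlift, vlift_last] at hcap
  have hbound := norm_vproj_le_of_mem_Udual hn hK (hKint.mono interior_subset) hε.le hy hwU hcap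
  rw [mem_closedBall_zero_iff]
  exact le_of_mul_le_mul_left (by linarith) hε

end
end
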